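/- For d ≥ 4, 0 ≤ j ≤ d, 2 ≤ i ≤ d-2, and 1 ≤ l ≤ d-2, the inequality A(d+1, i, d+1-j, l+1) < A(d+1, i, d+1-j, l) is strict. -/

import Mathlib

/-- The set `S_n^l` of permutations of `Fin n` whose first `l` values
(1-indexed positions `1,…,l`) are strictly decreasing. -/
def SdSet (n l : ℕ) : Set (Equiv.Perm (Fin n)) :=
  {σ | ∀ s t : Fin n, s < t → (t : ℕ) < l → σ t < σ s}

/-- `pv n σ m` is the 1-indexed value `σ(m+1)` of the permutation at the
0-indexed position `m` (and `0` if `m` is out of range). -/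
def pv (n : ℕ) (σ : Equiv.Perm (Fin n)) (m : ℕ) : ℕ :=
  if h : m < n then (σ ⟨m, h⟩ : ℕ) + 1 else 0

/-- The `l`-descent set of `σ`, in 0-indexed positions: `m` (0-indexed,
corresponding to the 1-indexed position `m+1 ∈ [n-1]`) is an `l`-descent if
either `m+1 ∈ [l]` and `σ(m+1) > σ(l+1)`, or `m+1 ∈ [n-1]∖[l]` and
`σ(m+1) > σ(m+2)`. -/
def lDesc (n l : ℕ) (σ : Equiv.Perm (Fin n)) : Finset ℕ :=
  (Finset.range (n - 1)).filter fun m =>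
    (m < l ∧ pv n σ l < pv n σ m) ∨ (l ≤ m ∧ pv n σ (m + 1) < pv n σ m)

/-- `Acard n i k l` is the number of permutations `σ ∈ S_n^l` with exactly `i`
`l`-descents and last (1-indexed) value `σ(n) = k`. -/
noncomputable def Acard (n i k l : ℕ) : ℕ :=
  Nat.card {σ : Equiv.Perm (Fin n) //
    σ ∈ SdSet n l ∧ (lDesc n l σ).card = i ∧ pv n σ (n - 1) = k}

namespace AcardAux

open Finset

/-! ### Generic lemmas about `pv`, `SdSet`, `lDesc` -/

lemma pv_lt_pv_iff (n : ℕ) (σ : Equiv.Perm (Fin n)) {x y : ℕ} (hx : x < n) (hy : y < n) :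
    pv n σ x < pv n σ y ↔ (σ ⟨x, hx⟩ : ℕ) < (σ ⟨y, hy⟩ : ℕ) := by
  simp [pv, hx, hy]

lemma dec_iff {n c : ℕ} {σ : Equiv.Perm (Fin n)} (hσ : σ ∈ SdSet n c)
    {x y : ℕ} (hx : x < c) (hy : y < c) (hxn : x < n) (hyn : y < n) :
    pv n σ x < pv n σ y ↔ y < x := by
  rw [pv_lt_pv_iff n σ hxn hyn]
  rcases lt_trichotomy y x with h | h | h
  · simp only [h, iff_true]
    exact hσ ⟨y, hyn⟩ ⟨x, hxn⟩ (by simpa [Fin.lt_def] using h) hx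
  · subst h; simp
  · have := hσ ⟨x, hxn⟩ ⟨y, hyn⟩ (by simpa [Fin.lt_def] using h) hy
    simp only [Fin.lt_def] at this
    omega

/-- decomposition of the `l`-descent count into block part and tail part -/
lemma ldesc_card_split (n p : ℕ) (σ : Equiv.Perm (Fin n)) (hp : p ≤ n - 1) :
    (lDesc n p σ).card
      = ((Finset.range p).filter fun m => pv n σ p < pv n σ m).card
        + ((Finset.Ico p (n-1)).filter fun m => pv n σ (m+1) < pv n σ m).card := by
  classical
  have hsplit : Finset.range (n-1) = Finset.Ico 0 p ∪ Finset.Ico p (n-1) := by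
    rw [Finset.Ico_union_Ico_eq_Ico (Nat.zero_le _) hp, ← Finset.range_eq_Ico]
  rw [lDesc, hsplit, Finset.filter_union]
  rw [Finset.card_union_of_disjoint]
  · congr 1
    · rw [← Finset.range_eq_Ico]
      apply Finset.card_nbij id
      · intro m hm
        simp only [Finset.mem_coe, Finset.mem_filter, Finset.mem_range] at hm ⊢
        rcases hm with ⟨h1, h2 | h2⟩
        · exact ⟨h1, h2.2⟩
        · omega
      · exact Set.injOn_id _
      · intro m hm
        simp only [Finset.coe_filter, Finset.mem_range, Set.mem_setOf_eq, Set.mem_image] at hm ⊢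
        exact ⟨m, ⟨hm.1, Or.inl ⟨hm.1, hm.2⟩⟩, rfl⟩
    · apply Finset.card_nbij id
      · intro m hm
        simp only [Finset.mem_coe, Finset.mem_filter, Finset.mem_Ico] at hm ⊢
        rcases hm with ⟨h1, h2 | h2⟩
        · omega
        · exact ⟨h1, h2.2⟩
      · exact Set.injOn_id _
      · intro m hm
        simp only [Finset.coe_filter, Finset.mem_Ico, Set.mem_setOf_eq, Set.mem_image] at hm ⊢
        exact ⟨m, ⟨hm.1, Or.inr ⟨hm.1.1, hm.2⟩⟩, rfl⟩
  · apply Finset.disjoint_filter_filter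
    rw [Finset.disjoint_left]
    intro m hm hm'
    simp only [Finset.mem_Ico] at hm hm'
    omega

/-- the statistic `t`: number of positions among `0..l` whose value exceeds the
value at position `l+1` -/
def tstatF (n l : ℕ) (σ : Equiv.Perm (Fin n)) : ℕ :=
  ((Finset.range (l+1)).filter fun m => pv n σ (l+1) < pv n σ m).card

/-- the statistic `u`: number of positions among `0..l-1` whose value exceeds the
value at position `l` -/
def ustatF (n l : ℕ) (σ : Equiv.Perm (Fin n)) : ℕ :=
  ((Finset.range l).filter fun m => pv n σ l < pv n σ m).card

lemma tstatF_le (n l : ℕ) (σ : Equiv.Perm (Fin n)) : tstatF n l σ ≤ l + 1 :=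
  le_trans (Finset.card_filter_le _ _) (by simp)

/-- threshold property: since positions `0..l` are decreasing, a value there exceeds
the pivot iff the position is `< t`. -/
lemma threshold {n l : ℕ} {σ : Equiv.Perm (Fin n)} (hσ : σ ∈ SdSet n (l+1))
    (hn : l + 1 < n) {m : ℕ} (hm : m ≤ l) :
    pv n σ (l+1) < pv n σ m ↔ m < tstatF n l σ := by
  classical
  set S := (Finset.range (l+1)).filter fun m => pv n σ (l+1) < pv n σ m with hS
  constructor
  · intro h
    have hsub : Finset.range (m+1) ⊆ S := by
      intro m' hm'
      simp only [Finset.mem_range] at hm'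
      simp only [hS, Finset.mem_filter, Finset.mem_range]
      refine ⟨by omega, ?_⟩
      rcases Nat.lt_or_ge m' m with h' | h'
      · have := (dec_iff hσ (by omega) (by omega) (by omega) (by omega)).mpr h'
        -- pv σ m < pv σ m'
        omega
      · have : m' = m := by omega
        subst this; exact h
    have := Finset.card_le_card hsub
    simp only [Finset.card_range] at this
    exact lt_of_lt_of_le (Nat.lt_succ_self m) this
  · intro h
    by_contra hcon
    push_neg at hcon
    have hsub : S ⊆ Finset.range m := by
      intro m'' h''
      simp only [hS, Finset.mem_filter, Finset.mem_range] at h''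
      simp only [Finset.mem_range]
      by_contra hge
      push_neg at hge
      rcases Nat.lt_or_ge m m'' with h' | h'
      · have := (dec_iff hσ (by omega) (by omega) (by omega) (by omega)).mpr h'
        -- pv σ m'' < pv σ m
        omega
      · have : m'' = m := by omega
        subst this
        omega
    have := Finset.card_le_card hsub
    simp only [Finset.card_range] at this
    have hts : tstatF n l σ = S.card := rfl
    omega

end AcardAux

namespace AcardAux

open Finset Equiv

/-! ### The cyclic shift of positions `a..b` -/

def cfN (a b m : ℕ) : ℕ := if a ≤ m ∧ m < b then m + 1 else if m = b then a else m

def cgN (a b m : ℕ) : ℕ := if a < m ∧ m ≤ b then m - 1 else if m = a then b else m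

lemma cfN_lt {n a b m : ℕ} (hab : a ≤ b) (hb : b < n) (hm : m < n) : cfN a b m < n := by
  unfold cfN; split_ifs <;> omega

lemma cgN_lt {n a b m : ℕ} (hab : a ≤ b) (hb : b < n) (hm : m < n) : cgN a b m < n := by
  unfold cgN; split_ifs <;> omega

lemma cgN_cfN {a b m : ℕ} (hab : a ≤ b) : cgN a b (cfN a b m) = m := by
  unfold cfN cgN; split_ifs <;> omega

lemma cfN_cgN {a b m : ℕ} (hab : a ≤ b) : cfN a b (cgN a b m) = m := by
  unfold cfN cgN; split_ifs <;> omega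

def cyc (n a b : ℕ) : Equiv.Perm (Fin n) where
  toFun m := if h : a ≤ b ∧ b < n then ⟨cfN a b m, cfN_lt h.1 h.2 m.2⟩ else m
  invFun m := if h : a ≤ b ∧ b < n then ⟨cgN a b m, cgN_lt h.1 h.2 m.2⟩ else m
  left_inv m := by
    by_cases h : a ≤ b ∧ b < n
    · simp only [dif_pos h]
      exact Fin.ext (cgN_cfN h.1)
    · simp only [dif_neg h]
  right_inv m := by
    by_cases h : a ≤ b ∧ b < n
    · simp only [dif_pos h]
      exact Fin.ext (cfN_cgN h.1)
    · simp only [dif_neg h]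

lemma cyc_coe {n a b : ℕ} (hab : a ≤ b) (hb : b < n) (m : Fin n) :
    ((cyc n a b m : Fin n) : ℕ) = cfN a b (m : ℕ) := by
  simp only [cyc, Equiv.coe_fn_mk, dif_pos (And.intro hab hb)]

/-! ### The injection `Φ` -/

noncomputable def Phi (n l : ℕ) (σ : Equiv.Perm (Fin n)) : Equiv.Perm (Fin n) :=
  σ * cyc n (tstatF n l σ - 1) l

set_option linter.unusedSectionVars false
set_option linter.unusedVariables false

section PhiLemmas

variable {n l : ℕ} {σ : Equiv.Perm (Fin n)} (hσ : σ ∈ SdSet n (l+1)) (hn : l + 1 < n)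

/-- `pv` of `Φ σ` in terms of `pv` of `σ`. -/
lemma phi_pv (hb : l < n) (hl : tstatF n l σ - 1 ≤ l) {m : ℕ} (hm : m < n) :
    pv n (Phi n l σ) m = pv n σ (cfN (tstatF n l σ - 1) l m) := by
  have h1 : cfN (tstatF n l σ - 1) l m < n := cfN_lt hl hb hm
  rw [pv, dif_pos hm, pv, dif_pos h1]
  congr 2
  · show σ (cyc n (tstatF n l σ - 1) l ⟨m, hm⟩) = σ ⟨_, h1⟩
    congr 1
    exact Fin.ext (cyc_coe hl hb _)

include hσ hn

lemma t_minus_le : tstatF n l σ - 1 ≤ l := by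
  have := tstatF_le n l σ; omega

lemma phi_mem_sd : Phi n l σ ∈ SdSet n l := by
  intro s t hst htl
  set a := tstatF n l σ - 1 with ha
  have hal : a ≤ l := t_minus_le hσ hn
  have hbn : l < n := by omega
  show (Phi n l σ) t < (Phi n l σ) s
  have hs : (Phi n l σ) s = σ (cyc n a l s) := rfl
  have ht : (Phi n l σ) t = σ (cyc n a l t) := rfl
  rw [hs, ht]
  apply hσ
  · rw [Fin.lt_def, cyc_coe hal hbn, cyc_coe hal hbn]
    have := Fin.lt_def.mp hst
    unfold cfN; split_ifs <;> omega
  · rw [cyc_coe hal hbn]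
    have := Fin.lt_def.mp hst
    unfold cfN; split_ifs <;> omega

lemma phi_pv_last (hn2 : l + 1 < n - 1) : pv n (Phi n l σ) (n-1) = pv n σ (n-1) := by
  have hal : tstatF n l σ - 1 ≤ l := t_minus_le hσ hn
  rw [phi_pv (show l < n by omega) hal (by omega)]
  congr 1
  unfold cfN; split_ifs <;> omega

lemma tstat_phi : tstatF n l (Phi n l σ) = tstatF n l σ := by
  set a := tstatF n l σ - 1 with ha
  have hal : a ≤ l := t_minus_le hσ hn
  have hcfl1 : cfN a l (l+1) = l + 1 := by unfold cfN; split_ifs <;> omega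
  unfold tstatF
  apply Finset.card_bij' (fun m _ => cfN a l m) (fun m _ => cgN a l m)
  · intro m hm
    simp only [Finset.mem_filter, Finset.mem_range] at hm ⊢
    constructor
    · have := hm.1; unfold cfN; split_ifs <;> omega
    · have h2 := hm.2
      rw [phi_pv (show l < n by omega) hal (by omega), phi_pv (show l < n by omega) hal (by omega)] at h2
      rw [← ha, hcfl1] at h2
      exact h2
  · intro m hm
    simp only [Finset.mem_filter, Finset.mem_range] at hm ⊢
    constructor
    · have := hm.1; unfold cgN; split_ifs <;> omega
    · have h2 := hm.2
      rw [phi_pv (show l < n by omega) hal (show l+1 < n by omega),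
        phi_pv (show l < n by omega) hal (show cgN a l m < n from cgN_lt hal (by omega) (by omega)),
        ← ha, hcfl1, cfN_cgN hal]
      exact h2
  · intro m _; exact cgN_cfN hal
  · intro m _; exact cfN_cgN hal

lemma ustat_phi : ustatF n l (Phi n l σ) = tstatF n l σ - 1 := by
  set a := tstatF n l σ - 1 with ha
  have hal : a ≤ l := t_minus_le hσ hn
  have hcfl : cfN a l l = a := by unfold cfN; split_ifs <;> omega
  unfold ustatF
  rw [show ((Finset.range l).filter fun m => pv n (Phi n l σ) l < pv n (Phi n l σ) m)
      = Finset.range a from ?_]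
  · exact Finset.card_range a
  ext m
  simp only [Finset.mem_filter, Finset.mem_range]
  constructor
  · rintro ⟨hml, hcmp⟩
    rw [phi_pv (show l < n by omega) hal (by omega), phi_pv (show l < n by omega) hal (by omega), ← ha, hcfl] at hcmp
    have hcm : cfN a l m < a := by
      rcases Nat.lt_or_ge (cfN a l m) a with h | h
      · exact h
      · exfalso
        have hcmle : cfN a l m ≤ l := by unfold cfN; split_ifs <;> omega
        rcases Nat.eq_or_lt_of_le h with h' | h'
        · rw [← h'] at hcmp; omega
        · have := (dec_iff hσ (by omega) (by omega) (by omega) (by omega)).mp hcmp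
          omega
    unfold cfN at hcm; split_ifs at hcm <;> omega
  · intro hma
    have hml : m < l := by omega
    refine ⟨hml, ?_⟩
    rw [phi_pv (show l < n by omega) hal (by omega), phi_pv (show l < n by omega) hal (by omega), ← ha, hcfl]
    have hcm : cfN a l m = m := by unfold cfN; split_ifs <;> omega
    rw [hcm]
    exact (dec_iff hσ (by omega) (by omega) (by omega) (by omega)).mpr hma

lemma ldesc_phi (hn2 : l + 1 < n - 1) :
    (lDesc n l (Phi n l σ)).card = (lDesc n (l+1) σ).card := by
  classical
  set a := tstatF n l σ - 1 with ha
  have hal : a ≤ l := t_minus_le hσ hn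
  rw [ldesc_card_split n l (Phi n l σ) (by omega), ldesc_card_split n (l+1) σ (by omega)]
  -- first pieces
  have e1 : ((Finset.range l).filter fun m => pv n (Phi n l σ) l < pv n (Phi n l σ) m).card = a :=
    ustat_phi hσ hn
  have e2 : ((Finset.range (l+1)).filter fun m => pv n σ (l+1) < pv n σ m).card = tstatF n l σ := rfl
  rw [e1, e2]
  -- second pieces
  have hIco : Finset.Ico l (n-1) = insert l (Finset.Ico (l+1) (n-1)) := by
    ext x; simp only [Finset.mem_Ico, Finset.mem_insert]; omega
  rw [hIco, Finset.filter_insert]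
  have htailcong : ∀ m ∈ Finset.Ico (l+1) (n-1),
      (pv n (Phi n l σ) (m+1) < pv n (Phi n l σ) m ↔ pv n σ (m+1) < pv n σ m) := by
    intro m hm
    simp only [Finset.mem_Ico] at hm
    have c1 : cfN a l m = m := by unfold cfN; split_ifs <;> omega
    have c2 : cfN a l (m+1) = m + 1 := by unfold cfN; split_ifs <;> omega
    rw [phi_pv (show l < n by omega) hal (by omega), phi_pv (show l < n by omega) hal (by omega), ← ha, c1, c2]
  have etail : ((Finset.Ico (l+1) (n-1)).filter fun m => pv n (Phi n l σ) (m+1) < pv n (Phi n l σ) m)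
      = ((Finset.Ico (l+1) (n-1)).filter fun m => pv n σ (m+1) < pv n σ m) :=
    Finset.filter_congr htailcong
  -- the descent condition at position l
  have hdescl : (pv n (Phi n l σ) (l+1) < pv n (Phi n l σ) l) ↔ 1 ≤ tstatF n l σ := by
    have c1 : cfN a l l = a := by unfold cfN; split_ifs <;> omega
    have c2 : cfN a l (l+1) = l+1 := by unfold cfN; split_ifs <;> omega
    rw [phi_pv (show l < n by omega) hal (by omega), phi_pv (show l < n by omega) hal (by omega), ← ha, c1, c2]
    rw [threshold hσ hn (show a ≤ l from hal)]
    omega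
  by_cases ht : 1 ≤ tstatF n l σ
  · rw [if_pos (hdescl.mpr ht)]
    rw [Finset.card_insert_of_notMem (by simp [Finset.mem_filter])]
    rw [etail]
    omega
  · rw [if_neg (fun h => ht (hdescl.mp h))]
    rw [etail]
    omega

lemma phi_not_P : ¬ (1 ≤ tstatF n l (Phi n l σ) ∧ ustatF n l (Phi n l σ) = tstatF n l (Phi n l σ)) := by
  rw [tstat_phi hσ hn, ustat_phi hσ hn]
  omega

end PhiLemmas

end AcardAux

namespace AcardAux

open Finset

/-! ### The witness permutation `τ₀` -/

section Witness

variable (d l i j : ℕ)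

def kv : ℕ := d - j

def tV : ℕ := if l = d - 2 ∧ i < j then i - 1 else max 1 (i - (d - l - 1) + 1)

def qV : ℕ := if j ≤ tV d l i j then i - tV d l i j + 1 else i - tV d l i j

def rho (x : ℕ) : ℕ := if x < kv d j then x else x + 1

def gV (p : ℕ) : ℕ :=
  if p < tV d l i j then d - 1 - p
  else if p < l then l - 1 - p
  else if p = l then l - tV d l i j
  else if p ≤ l + qV d l i j then 2*l + 1 + qV d l i j - tV d l i j - p
  else p - tV d l i j

def fV (p : ℕ) : ℕ := if p = d then kv d j else rho d j (gV d l i j p)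

variable (hd : 4 ≤ d) (hj : j ≤ d) (hi2 : 2 ≤ i) (hid : i ≤ d - 2)
  (hl : 1 ≤ l) (hld : l ≤ d - 2)

include hd hj hi2 hid hl hld

lemma params :
    1 ≤ tV d l i j ∧ tV d l i j ≤ l ∧ tV d l i j ≤ i ∧ 1 ≤ qV d l i j
      ∧ qV d l i j ≤ d - l - 1
      ∧ (j ≤ tV d l i j → qV d l i j = i - tV d l i j + 1)
      ∧ (tV d l i j < j → qV d l i j = i - tV d l i j)
      ∧ (qV d l i j = d - l - 1 ∧ tV d l i j < j → d - l - 1 + tV d l i j ≤ j) := by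
  unfold qV tV
  split_ifs <;> omega

lemma gV_lt {p : ℕ} (hp : p < d) : gV d l i j p < d := by
  obtain ⟨p1, p2, p3, p4, p5, p6, p7, p8⟩ := params d l i j hd hj hi2 hid hl hld
  unfold gV; split_ifs <;> omega

lemma gV_inj {p p' : ℕ} (hp : p < d) (hp' : p' < d) (h : gV d l i j p = gV d l i j p') :
    p = p' := by
  obtain ⟨p1, p2, p3, p4, p5, p6, p7, p8⟩ := params d l i j hd hj hi2 hid hl hld
  unfold gV at h; split_ifs at h <;> omega

omit hd hj hi2 hid hl hld in
lemma rho_lt {x : ℕ} (hx : x < d) : rho d j x ≤ d := by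
  unfold rho; split_ifs <;> omega

omit hd hj hi2 hid hl hld in
lemma rho_ne {x : ℕ} : rho d j x ≠ kv d j := by
  unfold rho; split_ifs <;> omega

omit hd hj hi2 hid hl hld in
lemma rho_inj {x y : ℕ} (h : rho d j x = rho d j y) : x = y := by
  unfold rho at h; split_ifs at h <;> omega

omit hd hj hi2 hid hl hld in
lemma rho_lt_rho {x y : ℕ} : rho d j x < rho d j y ↔ x < y := by
  unfold rho; split_ifs <;> omega

omit hd hj hi2 hid hl hld in
lemma kv_lt_rho {x : ℕ} : kv d j < rho d j x ↔ kv d j ≤ x := by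
  unfold rho; split_ifs <;> omega

lemma fV_le {p : ℕ} (hp : p ≤ d) : fV d l i j p ≤ d := by
  unfold fV
  split_ifs with h
  · unfold kv; omega
  · exact rho_lt d j (gV_lt d l i j hd hj hi2 hid hl hld (by omega))

lemma fV_inj {p p' : ℕ} (hp : p ≤ d) (hp' : p' ≤ d) (h : fV d l i j p = fV d l i j p') :
    p = p' := by
  unfold fV at h
  split_ifs at h with h1 h2 h2
  · omega
  · exact absurd h.symm (rho_ne d j)
  · exact absurd h (rho_ne d j)
  · exact gV_inj d l i j hd hj hi2 hid hl hld (by omega) (by omega) (rho_inj d j h)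

noncomputable def tau0 : Equiv.Perm (Fin (d+1)) :=
  Equiv.ofBijective
    (fun p : Fin (d+1) => (⟨fV d l i j p, by
      have := fV_le d l i j hd hj hi2 hid hl hld (show (p:ℕ) ≤ d by omega); omega⟩ : Fin (d+1)))
    (Finite.injective_iff_bijective.mp (by
      intro p p' hpp
      have := fV_inj d l i j hd hj hi2 hid hl hld (show (p:ℕ) ≤ d by omega)
        (show (p':ℕ) ≤ d by omega) (by simpa using congrArg Fin.val hpp)
      exact Fin.ext this))

lemma tau0_pv {m : ℕ} (hm : m < d + 1) :
    pv (d+1) (tau0 d l i j hd hj hi2 hid hl hld) m = fV d l i j m + 1 := by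
  rw [pv, dif_pos hm]
  simp [tau0, Equiv.ofBijective_apply]

/-! comparison lemmas for `fV` -/

lemma W1 {m m' : ℕ} (h1 : m < m') (h2 : m' < l) :
    fV d l i j m' < fV d l i j m := by
  obtain ⟨p1, p2, p3, p4, p5, p6, p7, p8⟩ := params d l i j hd hj hi2 hid hl hld
  have e1 : fV d l i j m = rho d j (gV d l i j m) := by unfold fV; rw [if_neg (by omega)]
  have e2 : fV d l i j m' = rho d j (gV d l i j m') := by unfold fV; rw [if_neg (by omega)]
  rw [e1, e2, rho_lt_rho]
  unfold gV; split_ifs <;> omega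

lemma W2 {m : ℕ} (hm : m ≤ l) :
    (fV d l i j l < fV d l i j m ↔ m < tV d l i j) := by
  obtain ⟨p1, p2, p3, p4, p5, p6, p7, p8⟩ := params d l i j hd hj hi2 hid hl hld
  have e1 : fV d l i j m = rho d j (gV d l i j m) := by unfold fV; rw [if_neg (by omega)]
  have e2 : fV d l i j l = rho d j (gV d l i j l) := by unfold fV; rw [if_neg (by omega)]
  rw [e1, e2, rho_lt_rho]
  unfold gV; split_ifs <;> omega

lemma W3 {m : ℕ} (hm : m ≤ l) :
    (fV d l i j (l+1) < fV d l i j m ↔ m < tV d l i j) := by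
  obtain ⟨p1, p2, p3, p4, p5, p6, p7, p8⟩ := params d l i j hd hj hi2 hid hl hld
  have e1 : fV d l i j m = rho d j (gV d l i j m) := by unfold fV; rw [if_neg (by omega)]
  have e2 : fV d l i j (l+1) = rho d j (gV d l i j (l+1)) := by unfold fV; rw [if_neg (by omega)]
  rw [e1, e2, rho_lt_rho]
  unfold gV; split_ifs <;> omega

lemma W4 {m : ℕ} (hm1 : l ≤ m) (hm2 : m < d) :
    (fV d l i j (m+1) < fV d l i j m
      ↔ ((l + 1 ≤ m ∧ m + 1 ≤ l + qV d l i j) ∨ (m = d - 1 ∧ tV d l i j < j))) := by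
  obtain ⟨p1, p2, p3, p4, p5, p6, p7, p8⟩ := params d l i j hd hj hi2 hid hl hld
  have e1 : fV d l i j m = rho d j (gV d l i j m) := by unfold fV; rw [if_neg (by omega)]
  by_cases hm3 : m + 1 = d
  · have e2 : fV d l i j (m+1) = kv d j := by unfold fV; rw [if_pos hm3]
    rw [e1, e2, kv_lt_rho]
    unfold kv
    unfold gV; split_ifs <;> omega
  · have e2 : fV d l i j (m+1) = rho d j (gV d l i j (m+1)) := by
      unfold fV; rw [if_neg (by omega)]
    rw [e1, e2, rho_lt_rho]
    unfold gV; split_ifs <;> omega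

lemma fV_last : fV d l i j d = d - j := by
  unfold fV kv; rw [if_pos rfl]

end Witness

end AcardAux

namespace AcardAux

open Finset

section Witness2

variable (d l i j : ℕ) (hd : 4 ≤ d) (hj : j ≤ d) (hi2 : 2 ≤ i) (hid : i ≤ d - 2)
  (hl : 1 ≤ l) (hld : l ≤ d - 2)

local notation "τ" => tau0 d l i j hd hj hi2 hid hl hld

include hd hj hi2 hid hl hld

lemma tau0_mem_sd : τ ∈ SdSet (d+1) l := by
  intro s t hst htl
  rw [Fin.lt_def]
  have es : ((τ : Equiv.Perm (Fin (d+1))) s : ℕ) = fV d l i j s := by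
    simp [tau0, Equiv.ofBijective_apply]
  have et : ((τ : Equiv.Perm (Fin (d+1))) t : ℕ) = fV d l i j t := by
    simp [tau0, Equiv.ofBijective_apply]
  rw [es, et]
  exact W1 d l i j hd hj hi2 hid hl hld (Fin.lt_def.mp hst) htl

lemma tau0_last : pv (d+1) τ ((d+1) - 1) = d + 1 - j := by
  have : (d+1) - 1 = d := rfl
  rw [this, tau0_pv d l i j hd hj hi2 hid hl hld (by omega), fV_last d l i j hd hj hi2 hid hl hld]
  omega

lemma tau0_tstat : tstatF (d+1) l τ = tV d l i j := by
  obtain ⟨p1, p2, p3, p4, p5, p6, p7, p8⟩ := params d l i j hd hj hi2 hid hl hld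
  unfold tstatF
  rw [show ((Finset.range (l+1)).filter fun m => pv (d+1) τ (l+1) < pv (d+1) τ m)
      = Finset.range (tV d l i j) from ?_]
  · exact Finset.card_range _
  ext m
  simp only [Finset.mem_filter, Finset.mem_range]
  constructor
  · rintro ⟨hm, hcmp⟩
    rw [tau0_pv d l i j hd hj hi2 hid hl hld (by omega),
      tau0_pv d l i j hd hj hi2 hid hl hld (by omega)] at hcmp
    have := (W3 d l i j hd hj hi2 hid hl hld (show m ≤ l by omega)).mp (by omega)
    exact this
  · intro hm
    refine ⟨by omega, ?_⟩
    rw [tau0_pv d l i j hd hj hi2 hid hl hld (by omega),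
      tau0_pv d l i j hd hj hi2 hid hl hld (by omega)]
    have := (W3 d l i j hd hj hi2 hid hl hld (show m ≤ l by omega)).mpr hm
    omega

lemma tau0_ustat : ustatF (d+1) l τ = tV d l i j := by
  obtain ⟨p1, p2, p3, p4, p5, p6, p7, p8⟩ := params d l i j hd hj hi2 hid hl hld
  unfold ustatF
  rw [show ((Finset.range l).filter fun m => pv (d+1) τ l < pv (d+1) τ m)
      = Finset.range (tV d l i j) from ?_]
  · exact Finset.card_range _
  ext m
  simp only [Finset.mem_filter, Finset.mem_range]
  constructor
  · rintro ⟨hm, hcmp⟩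
    rw [tau0_pv d l i j hd hj hi2 hid hl hld (by omega),
      tau0_pv d l i j hd hj hi2 hid hl hld (by omega)] at hcmp
    exact (W2 d l i j hd hj hi2 hid hl hld (show m ≤ l by omega)).mp (by omega)
  · intro hm
    refine ⟨by omega, ?_⟩
    rw [tau0_pv d l i j hd hj hi2 hid hl hld (by omega),
      tau0_pv d l i j hd hj hi2 hid hl hld (by omega)]
    have := (W2 d l i j hd hj hi2 hid hl hld (show m ≤ l by omega)).mpr hm
    omega

lemma tau0_ldesc : (lDesc (d+1) l τ).card = i := by
  classical
  obtain ⟨p1, p2, p3, p4, p5, p6, p7, p8⟩ := params d l i j hd hj hi2 hid hl hld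
  rw [ldesc_card_split (d+1) l τ (by omega)]
  have e1 : ((Finset.range l).filter fun m => pv (d+1) τ l < pv (d+1) τ m).card = tV d l i j :=
    tau0_ustat d l i j hd hj hi2 hid hl hld
  rw [e1]
  have hdesc : ∀ m, l ≤ m → m < d →
      (pv (d+1) τ (m+1) < pv (d+1) τ m
        ↔ ((l + 1 ≤ m ∧ m + 1 ≤ l + qV d l i j) ∨ (m = d - 1 ∧ tV d l i j < j))) := by
    intro m h1 h2
    rw [tau0_pv d l i j hd hj hi2 hid hl hld (by omega),
      tau0_pv d l i j hd hj hi2 hid hl hld (by omega)]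
    rw [show (fV d l i j (m+1) + 1 < fV d l i j m + 1 ↔ fV d l i j (m+1) < fV d l i j m)
      from by omega]
    exact W4 d l i j hd hj hi2 hid hl hld h1 h2
  have hd1 : (d+1) - 1 = d := rfl
  rw [hd1]
  by_cases hc : tV d l i j < j
  · have : ((Finset.Ico l d).filter fun m => pv (d+1) τ (m+1) < pv (d+1) τ m)
        = insert (d-1) (Finset.Ico (l+1) (l + qV d l i j)) := by
      ext m
      simp only [Finset.mem_filter, Finset.mem_Ico, Finset.mem_insert]
      constructor
      · rintro ⟨⟨h1, h2⟩, hcmp⟩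
        rcases (hdesc m h1 h2).mp hcmp with h | h
        · right; omega
        · left; exact h.1
      · intro h
        have h1 : l ≤ m := by rcases h with h | h <;> omega
        have h2 : m < d := by rcases h with h | h <;> omega
        refine ⟨⟨h1, h2⟩, (hdesc m h1 h2).mpr ?_⟩
        rcases h with h | h
        · right; exact ⟨h, hc⟩
        · left; omega
    rw [this, Finset.card_insert_of_notMem (by simp only [Finset.mem_Ico]; omega),
      Nat.card_Ico]
    omega
  · have : ((Finset.Ico l d).filter fun m => pv (d+1) τ (m+1) < pv (d+1) τ m)
        = Finset.Ico (l+1) (l + qV d l i j) := by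
      ext m
      simp only [Finset.mem_filter, Finset.mem_Ico]
      constructor
      · rintro ⟨⟨h1, h2⟩, hcmp⟩
        rcases (hdesc m h1 h2).mp hcmp with h | h
        · omega
        · omega
      · intro h
        have h1 : l ≤ m := by omega
        have h2 : m < d := by omega
        exact ⟨⟨h1, h2⟩, (hdesc m h1 h2).mpr (Or.inl (by omega))⟩
    rw [this, Nat.card_Ico]
    omega

lemma tau0_P : 1 ≤ tstatF (d+1) l τ ∧ ustatF (d+1) l τ = tstatF (d+1) l τ := by
  obtain ⟨p1, p2, p3, p4, p5, p6, p7, p8⟩ := params d l i j hd hj hi2 hid hl hld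
  rw [tau0_tstat d l i j hd hj hi2 hid hl hld, tau0_ustat d l i j hd hj hi2 hid hl hld]
  omega

end Witness2

end AcardAux

open AcardAux

/-- Strict monotonicity in `l`: for `d ≥ 4`, `0 ≤ j ≤ d`, `2 ≤ i ≤ d-2` and
`1 ≤ l ≤ d-2`, `A(d+1, i, d+1-j, l+1) < A(d+1, i, d+1-j, l)`. -/
theorem Acard_strict_mono (d l i j : ℕ) (hd : 4 ≤ d) (hj : j ≤ d)
    (hi2 : 2 ≤ i) (hid : i ≤ d - 2) (hl : 1 ≤ l) (hld : l ≤ d - 2) :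
    Acard (d + 1) i (d + 1 - j) (l + 1) < Acard (d + 1) i (d + 1 - j) l := by
  classical
  have bridge : ∀ p : ℕ, Acard (d+1) i (d+1-j) p
      = (Finset.univ.filter fun σ : Equiv.Perm (Fin (d+1)) =>
          σ ∈ SdSet (d+1) p ∧ (lDesc (d+1) p σ).card = i ∧ pv (d+1) σ ((d+1)-1) = d+1-j).card := by
    intro p
    rw [Acard, Nat.card_eq_fintype_card, Fintype.card_subtype]
  rw [bridge (l+1), bridge l]
  set X1 := (Finset.univ.filter fun σ : Equiv.Perm (Fin (d+1)) =>
      σ ∈ SdSet (d+1) (l+1) ∧ (lDesc (d+1) (l+1) σ).card = i ∧ pv (d+1) σ ((d+1)-1) = d+1-j)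
    with hX1
  set X0 := (Finset.univ.filter fun σ : Equiv.Perm (Fin (d+1)) =>
      σ ∈ SdSet (d+1) l ∧ (lDesc (d+1) l σ).card = i ∧ pv (d+1) σ ((d+1)-1) = d+1-j)
    with hX0
  have hn : l + 1 < d + 1 := by omega
  have hn2 : l + 1 < (d+1) - 1 := by omega
  set τ₀ := tau0 d l i j hd hj hi2 hid hl hld with hτ₀
  have hτ0_mem : τ₀ ∈ X0 := by
    rw [hX0]
    simp only [Finset.mem_filter, Finset.mem_univ, true_and]
    exact ⟨tau0_mem_sd d l i j hd hj hi2 hid hl hld,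
      tau0_ldesc d l i j hd hj hi2 hid hl hld,
      tau0_last d l i j hd hj hi2 hid hl hld⟩
  have h_im : ∀ σ ∈ X1, Phi (d+1) l σ ∈ X0.erase τ₀ := by
    intro σ hσmem
    rw [hX1] at hσmem
    simp only [Finset.mem_filter, Finset.mem_univ, true_and] at hσmem
    obtain ⟨hsd, hdc, hlast⟩ := hσmem
    rw [Finset.mem_erase]
    constructor
    · intro heq
      have h1 := phi_not_P hsd hn
      rw [heq] at h1
      exact h1 (tau0_P d l i j hd hj hi2 hid hl hld)
    · rw [hX0]
      simp only [Finset.mem_filter, Finset.mem_univ, true_and]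
      refine ⟨phi_mem_sd hsd hn, ?_, ?_⟩
      · rw [ldesc_phi hsd hn hn2, hdc]
      · rw [phi_pv_last hsd hn hn2, hlast]
  have h_inj : Set.InjOn (Phi (d+1) l) ↑X1 := by
    intro σ₁ h1 σ₂ h2 heq
    rw [hX1] at h1 h2
    simp only [Finset.coe_filter, Finset.mem_univ, true_and, Set.mem_setOf_eq] at h1 h2
    have ht : tstatF (d+1) l σ₁ = tstatF (d+1) l σ₂ := by
      have e1 := tstat_phi h1.1 hn
      have e2 := tstat_phi h2.1 hn
      rw [← e1, ← e2, heq]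
    unfold Phi at heq
    rw [ht] at heq
    exact mul_right_cancel heq
  calc X1.card = (X1.image (Phi (d+1) l)).card := (Finset.card_image_of_injOn h_inj).symm
    _ ≤ (X0.erase τ₀).card := by
        apply Finset.card_le_card
        intro x hx
        rw [Finset.mem_image] at hx
        obtain ⟨σ, hσ, rfl⟩ := hx
        exact h_im σ hσ
    _ < X0.card := by
        rw [Finset.card_erase_of_mem hτ0_mem]
        have : 0 < X0.card := Finset.card_pos.mpr ⟨τ₀, hτ0_mem⟩
        omega
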